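/- Let R be a finite based ℝ_{≥0}-algebra with basis C = {1 = c_0, …, c_{r−1}}, let c ∈ ℝ_{≥0}C, and let M(c) be the action matrix of c restricted to the connected component of 1. If M(c) is irreducible with Perron–Frobenius eigenvalue λ, then lim_{n→∞} (b_n^{R,c})^{1/n} = λ, where b_n^{R,c} is the sum of all coefficients of c^n in the basis C. -/

import Mathlib

def Matrix.IsIrreduciblePow {m : ℕ} (M : Matrix (Fin m) (Fin m) ℝ) : Prop :=
  ∀ i j : Fin m, ∃ n : ℕ, 0 < (M ^ (n + 1)) i j

/-- The characteristic polynomial of a real matrix, viewed over `ℂ`. -/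
noncomputable def Matrix.complexCharpoly {m : ℕ} (M : Matrix (Fin m) (Fin m) ℝ) :
    Polynomial ℂ :=
  (M.map (algebraMap ℝ ℂ)).charpoly

/-! The coefficients of `c ^ n` are the column `M ^ n e₀`, so `b n` is the `0`-th row sum of
`Mᵀ ^ n`. Lower bound: the entrywise absolute value of a real `λ`-eigenvector of `Mᵀ` is a
nonnegative sub-eigenvector, irreducibility lets a power of `Mᵀ + 1` make it strictly positive,
and iterating `λ w ≤ Mᵀ w` gives `C λ ^ n ≤ b n`. Upper bound: a row sum of `Mᵀ ^ n` is at most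
the `ℓ∞` operator norm of `N ^ n`, with `N` the complexification of `Mᵀ`, and by Gelfand's
formula `‖N ^ n‖ ^ (1 / n)` tends to the spectral radius of `N`, which the hypotheses pin down
as `λ`. -/

open Filter Matrix Topology

namespace Module.Basis

variable {K A ι : Type*} [CommSemiring K] [Semiring A] [Algebra K A] [Fintype ι] [DecidableEq ι]

theorem repr_pow_eq_toMatrix_mulLeft_pow_apply (b : Basis ι K A) {i₀ : ι} (h : b i₀ = 1)
    (c : A) (n : ℕ) (k : ι) :
    b.repr (c ^ n) k = (LinearMap.toMatrix b b (LinearMap.mulLeft K c) ^ n) k i₀ := by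
  rw [LinearMap.toMatrix_pow, LinearMap.pow_mulLeft, LinearMap.toMatrix_apply, h,
    LinearMap.mulLeft_apply, mul_one]

theorem toMatrix_mulLeft_apply_nonneg [PartialOrder K] [IsOrderedRing K] (b : Basis ι K A)
    (hb : ∀ i j k, 0 ≤ b.repr (b i * b j) k) {c : A} (hc : ∀ i, 0 ≤ b.repr c i) (k j : ι) :
    0 ≤ LinearMap.toMatrix b b (LinearMap.mulLeft K c) k j := by
  rw [LinearMap.toMatrix_apply, LinearMap.mulLeft_apply, ← b.sum_repr c, Finset.sum_mul]
  simp only [smul_mul_assoc, map_sum, map_smul, Finsupp.coe_finsetSum, Finset.sum_apply,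
    Finsupp.smul_apply, smul_eq_mul]
  exact Finset.sum_nonneg fun i _ => mul_nonneg (hc i) (hb i j k)

end Module.Basis

theorem spectrum.tendsto_norm_pow_rpow_inv {A : Type*} [NormedRing A] [NormedAlgebra ℂ A]
    [CompleteSpace A] {a : A} {t : ℝ} (ht : 0 ≤ t) (h : spectralRadius ℂ a = ENNReal.ofReal t) :
    Tendsto (fun n : ℕ => ‖a ^ n‖ ^ (n : ℝ)⁻¹) atTop (𝓝 t) := by
  have := (ENNReal.tendsto_toReal ENNReal.ofReal_ne_top).comp
    (h ▸ spectrum.pow_norm_pow_one_div_tendsto_nhds_spectralRadius a)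
  simpa [Function.comp_def, one_div, ENNReal.toReal_ofReal ht,
    ENNReal.toReal_ofReal (Real.rpow_nonneg (norm_nonneg _) _)] using this

namespace Matrix

section Nonneg

variable {ι : Type*} [Fintype ι] {A : Matrix ι ι ℝ}

theorem mulVec_mono (hA : ∀ i j, 0 ≤ A i j) {x y : ι → ℝ} (h : x ≤ y) : A *ᵥ x ≤ A *ᵥ y :=
  fun i => Finset.sum_le_sum fun j _ => mul_le_mul_of_nonneg_left (h j) (hA i j)

theorem smul_abs_le_mulVec_abs (hA : ∀ i j, 0 ≤ A i j) {t : ℝ} (ht : 0 ≤ t) {v : ι → ℝ}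
    (hv : A *ᵥ v = t • v) : t • |v| ≤ A *ᵥ |v| := fun i =>
  calc (t • |v|) i = |(A *ᵥ v) i| := by simp [hv, abs_mul, abs_of_nonneg ht]
    _ ≤ ∑ j, |A i j * v j| := Finset.abs_sum_le_sum_abs _ _
    _ = (A *ᵥ |v|) i := by simp [mulVec, dotProduct, abs_mul, abs_of_nonneg (hA i _)]

variable [DecidableEq ι]

theorem pow_smul_le_pow_mulVec (hA : ∀ i j, 0 ≤ A i j) {t : ℝ} (ht : 0 ≤ t) {w : ι → ℝ}
    (hw : t • w ≤ A *ᵥ w) (n : ℕ) : t ^ n • w ≤ A ^ n *ᵥ w := by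
  induction n with
  | zero => simp
  | succ n ih =>
    calc t ^ (n + 1) • w = t ^ n • (t • w) := by rw [pow_succ, mul_smul]
      _ ≤ t ^ n • (A *ᵥ w) := smul_le_smul_of_nonneg_left hw (pow_nonneg ht n)
      _ = A *ᵥ (t ^ n • w) := (mulVec_smul A _ w).symm
      _ ≤ A *ᵥ (A ^ n *ᵥ w) := mulVec_mono hA ih
      _ = A ^ (n + 1) *ᵥ w := by rw [mulVec_mulVec, pow_succ']

theorem pow_apply_le_add_one_pow_apply (hA : ∀ i j, 0 ≤ A i j) {m N : ℕ} (h : m ≤ N)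
    (i j : ι) : (A ^ m) i j ≤ ((A + 1) ^ N) i j := by
  rw [(Commute.one_right A).add_pow, Matrix.sum_apply]
  simp only [one_pow, mul_one, ← Nat.cast_comm, ← nsmul_eq_mul, smul_apply]
  calc (A ^ m) i j ≤ N.choose m • (A ^ m) i j :=
        le_smul_of_one_le_left (pow_apply_nonneg hA m i j) (Nat.choose_pos h)
    _ ≤ _ := Finset.single_le_sum (f := fun k => N.choose k • (A ^ k) i j)
        (fun k _ => nsmul_nonneg (pow_apply_nonneg hA k i j) _)
        (Finset.mem_range_succ_iff.2 h)

theorem IsIrreducible.exists_add_one_pow_pos (hA : A.IsIrreducible) :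
    ∃ N, ∀ i j, 0 < ((A + 1 : Matrix ι ι ℝ) ^ N) i j := by
  have hpow := (isIrreducible_iff_exists_pow_pos hA.nonneg).1 hA
  suffices ∀ᶠ N in atTop, ∀ i j, 0 < ((A + 1 : Matrix ι ι ℝ) ^ N) i j from this.exists
  simp only [eventually_all]
  intro i j
  obtain ⟨n, -, hn⟩ := hpow i j
  filter_upwards [eventually_ge_atTop n] with N hN
  exact hn.trans_le (pow_apply_le_add_one_pow_apply hA.nonneg hN i j)

theorem IsIrreducible.exists_pos_smul_le_mulVec (hA : A.IsIrreducible) {t : ℝ} {u : ι → ℝ}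
    (hu₀ : 0 ≤ u) (hu : u ≠ 0) (htu : t • u ≤ A *ᵥ u) :
    ∃ w : ι → ℝ, (∀ i, 0 < w i) ∧ t • w ≤ A *ᵥ w := by
  obtain ⟨N, hN⟩ := hA.exists_add_one_pow_pos
  obtain ⟨k, hk⟩ := Function.ne_iff.mp hu
  have hcomm : Commute A ((A + 1) ^ N) :=
    ((Commute.refl A).add_right (Commute.one_right A)).pow_right N
  refine ⟨(A + 1) ^ N *ᵥ u, fun i => ?_, ?_⟩
  · exact Finset.sum_pos' (fun j _ => mul_nonneg (hN i j).le (hu₀ j))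
      ⟨k, Finset.mem_univ k, mul_pos (hN i k) ((hu₀ k).lt_of_ne' hk)⟩
  · calc t • ((A + 1) ^ N *ᵥ u) = (A + 1) ^ N *ᵥ (t • u) := (mulVec_smul _ t u).symm
      _ ≤ (A + 1) ^ N *ᵥ (A *ᵥ u) := mulVec_mono (fun i j => (hN i j).le) htu
      _ = A *ᵥ ((A + 1) ^ N *ᵥ u) := by rw [mulVec_mulVec, mulVec_mulVec, hcomm.eq]

theorem IsIrreducible.exists_pos_mul_pow_le_sum_pow_apply (hA : A.IsIrreducible) {t : ℝ}
    (ht : 0 ≤ t) (hroot : A.charpoly.IsRoot t) (i : ι) :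
    ∃ C > 0, ∀ n : ℕ, C * t ^ n ≤ ∑ k, (A ^ n) i k := by
  obtain ⟨v, hv⟩ := ((Module.End.hasEigenvalue_iff_isRoot_charpoly (toLin' A) t).2
    (by rwa [charpoly_toLin'])).exists_hasEigenvector
  have hAv : A *ᵥ v = t • v := by simpa using hv.apply_eq_smul
  obtain ⟨w, hw, htw⟩ := hA.exists_pos_smul_le_mulVec (abs_nonneg v) (by simpa using hv.2)
    (smul_abs_le_mulVec_abs hA.nonneg ht hAv)
  set W := ∑ k, w k
  have hW : 0 < W := Finset.sum_pos (fun k _ => hw k) ⟨i, Finset.mem_univ i⟩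
  refine ⟨w i / W, div_pos (hw i) hW, fun n => ?_⟩
  rw [div_mul_eq_mul_div, div_le_iff₀ hW]
  calc w i * t ^ n = (t ^ n • w) i := mul_comm _ _
    _ ≤ (A ^ n *ᵥ w) i := pow_smul_le_pow_mulVec hA.nonneg ht htw n i
    _ ≤ ∑ k, (A ^ n) i k * W := Finset.sum_le_sum fun k _ =>
        mul_le_mul_of_nonneg_left (Finset.single_le_sum (fun j _ => (hw j).le)
          (Finset.mem_univ k)) (pow_apply_nonneg hA.nonneg n i k)
    _ = (∑ k, (A ^ n) i k) * W := (Finset.sum_mul _ _ _).symm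

end Nonneg

theorem IsIrreduciblePow.isIrreducible {m : ℕ} {A : Matrix (Fin m) (Fin m) ℝ}
    (h : A.IsIrreduciblePow) (hA : ∀ i j, 0 ≤ A i j) : A.IsIrreducible :=
  (isIrreducible_iff_exists_pow_pos hA).2 fun i j =>
    let ⟨n, hn⟩ := h i j; ⟨n + 1, n.succ_pos, hn⟩

section Spectral

attribute [local instance] Matrix.linftyOpSeminormedAddCommGroup Matrix.linftyOpNormedRing
  Matrix.linftyOpNormedAlgebra

theorem sum_norm_le_linfty_opNorm {m n α : Type*} [Fintype m] [Fintype n]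
    [SeminormedAddCommGroup α] (B : Matrix m n α) (i : m) : ∑ j, ‖B i j‖ ≤ ‖B‖ := by
  rw [linfty_opNorm_def]
  simpa only [NNReal.coe_sum, coe_nnnorm] using
    NNReal.coe_le_coe.2 (Finset.le_sup (f := fun i => ∑ j, ‖B i j‖₊) (Finset.mem_univ i))

variable {ι : Type*} [Fintype ι] [DecidableEq ι]

theorem spectralRadius_eq_of_isRoot_charpoly {N : Matrix ι ι ℂ} {t : ℝ} (ht : 0 ≤ t)
    (hroot : N.charpoly.IsRoot t) (hdom : ∀ μ : ℂ, N.charpoly.IsRoot μ → ‖μ‖ ≤ t) :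
    spectralRadius ℂ N = ENNReal.ofReal t := by
  refine le_antisymm (iSup₂_le fun μ hμ => ?_) (le_iSup₂_of_le (t : ℂ) ?_ ?_)
  · rw [← enorm_eq_nnnorm, ← ofReal_norm]
    exact ENNReal.ofReal_le_ofReal (hdom μ (mem_spectrum_iff_isRoot_charpoly.1 hμ))
  · exact mem_spectrum_iff_isRoot_charpoly.2 hroot
  · simp [abs_of_nonneg ht]

theorem IsIrreducible.tendsto_sum_pow_apply_rpow_inv {A : Matrix ι ι ℝ} (hA : A.IsIrreducible)
    {t : ℝ} (ht : 0 < t) (hroot : (A.map (algebraMap ℝ ℂ)).charpoly.IsRoot t)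
    (hdom : ∀ μ : ℂ, (A.map (algebraMap ℝ ℂ)).charpoly.IsRoot μ → ‖μ‖ ≤ t) (i : ι) :
    Tendsto (fun n : ℕ => (∑ k, (A ^ n) i k) ^ (n : ℝ)⁻¹) atTop (𝓝 t) := by
  have hroot' : A.charpoly.IsRoot t := by
    rwa [charpoly_map, ← Complex.coe_algebraMap, Polynomial.isRoot_map_iff
      (algebraMap ℝ ℂ).injective] at hroot
  obtain ⟨C, hC, hlow⟩ := hA.exists_pos_mul_pow_le_sum_pow_apply ht.le hroot' i
  have hC_lim : Tendsto (fun n : ℕ => C ^ (n : ℝ)⁻¹ * t) atTop (𝓝 t) := by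
    simpa using ((Real.continuousAt_const_rpow hC.ne').tendsto.comp
      (tendsto_inv_atTop_zero.comp tendsto_natCast_atTop_atTop)).mul_const t
  refine tendsto_of_tendsto_of_tendsto_of_le_of_le' hC_lim
    (spectrum.tendsto_norm_pow_rpow_inv (a := A.map (algebraMap ℝ ℂ)) ht.le
      (spectralRadius_eq_of_isRoot_charpoly ht.le hroot hdom)) ?_ (Eventually.of_forall fun n => ?_)
  · filter_upwards [eventually_ne_atTop 0] with n hn
    calc C ^ (n : ℝ)⁻¹ * t = (C * t ^ n) ^ (n : ℝ)⁻¹ := by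
          rw [Real.mul_rpow hC.le (by positivity), Real.pow_rpow_inv_natCast ht.le hn]
      _ ≤ _ := Real.rpow_le_rpow (by positivity) (hlow n) (by positivity)
  · refine Real.rpow_le_rpow (Finset.sum_nonneg fun k _ => pow_apply_nonneg hA.nonneg n i k)
      ?_ (by positivity)
    calc ∑ k, (A ^ n) i k = ∑ k, ‖(A.map (algebraMap ℝ ℂ) ^ n) i k‖ := by
          rw [← Matrix.map_pow]
          exact Finset.sum_congr rfl fun k _ => by
            simp [abs_of_nonneg (pow_apply_nonneg hA.nonneg n i k)]
      _ ≤ _ := sum_norm_le_linfty_opNorm _ i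

end Spectral

end Matrix

/-- For a finite based `ℝ≥0`-algebra `R` with basis `bC` containing the unit `bC 0 = 1`
and an element `c = ∑ a i • bC i` with nonnegative coefficients whose action matrix `M` is
irreducible with Perron–Frobenius eigenvalue `lam`, the total coefficient sum `b n` of
`c ^ n` in the basis satisfies `lim (b n)^(1/n) = lam`. -/
theorem based_algebra_growth_rate {r : ℕ} [NeZero r]
    {R : Type*} [Ring R] [Algebra ℝ R] (bC : Module.Basis (Fin r) ℝ R)
    (hone : bC 0 = 1)
    (hnn : ∀ i j k : Fin r, 0 ≤ bC.repr (bC i * bC j) k)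
    (a : Fin r → ℝ) (ha : ∀ i, 0 ≤ a i) (c : R) (hc : c = ∑ i, a i • bC i)
    (M : Matrix (Fin r) (Fin r) ℝ) (hM : ∀ k j, M k j = bC.repr (c * bC j) k)
    (hirr : M.IsIrreduciblePow)
    (lam : ℝ) (hpos : 0 < lam) (hroot : M.complexCharpoly.IsRoot (lam : ℂ))
    (hdom : ∀ μ : ℂ, M.complexCharpoly.IsRoot μ → ‖μ‖ ≤ lam)
    (b : ℕ → ℝ) (hb : ∀ n, b n = ∑ k, bC.repr (c ^ n) k) :
    Filter.Tendsto (fun n : ℕ => (b n) ^ ((n : ℝ)⁻¹)) Filter.atTop (nhds lam) := by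
  have hMc : M = LinearMap.toMatrix bC bC (LinearMap.mulLeft ℝ c) := by
    ext k j
    rw [hM, LinearMap.toMatrix_apply, LinearMap.mulLeft_apply]
  have hMnn : ∀ k j, 0 ≤ M k j := hMc ▸ bC.toMatrix_mulLeft_apply_nonneg hnn
    fun i => by rw [hc, bC.repr_sum_self]; exact ha i
  have hbM : b = fun n => ∑ k, (Mᵀ ^ n) 0 k := by
    funext n
    simp [hb, ← transpose_pow, hMc, bC.repr_pow_eq_toMatrix_mulLeft_pow_apply hone]
  have hMt : (Mᵀ.map (algebraMap ℝ ℂ)).charpoly = M.complexCharpoly := by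
    rw [transpose_map, charpoly_transpose, complexCharpoly]
  rw [hbM]
  exact (hirr.isIrreducible hMnn).transpose.tendsto_sum_pow_apply_rpow_inv hpos
    (hMt ▸ hroot) (hMt ▸ hdom) 0
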